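/- arXiv:2501.02194 — 2 statements merged into one kernel-verified Lean document; each statement's English description precedes it below -/
import Mathlib

section
/- The expected score gain function is not submodular: there exist a finite set V, a score function s : V → ℝ, sets A ⊆ B ⊆ V, and an element u ∈ V \ B such that ESG(A ∪ {u}) − ESG(A) < ESG(B ∪ {u}) − ESG(B), where ESG(C) = |C|^{-τ} (∑_{v∈C} s_v − (∑_{u∈V} s_u / |V|)·|C|) with τ = 0.9. -/
/-!
Write `d v = s v - avg` for the deviation from the average score, so that
`ESG C = (∑ v ∈ C, d v) / |C|^τ`. If `A ⊆ B` both have deviation sum `0`, then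
`ESG A = ESG B = 0` and adding an element `u` with `d u < 0` costs `d u / (|A| + 1)^τ`
at `A` but only `d u / (|B| + 1)^τ` at `B`: a larger set dilutes the loss. Concretely,
scores `(0, 0, -1, 1)` with `A = {0}`, `B = {0, 1}`, `u = 2` break submodularity for every `τ > 0`.
-/

open Finset

/-- Expected score gain of a subset `C` of `Fin n` with scores `s` and granularity `τ`. -/
noncomputable def ESG {n : ℕ} (s : Fin n → ℝ) (τ : ℝ) (C : Finset (Fin n)) : ℝ :=
  (1 / (C.card : ℝ) ^ τ) * ((∑ v ∈ C, s v) - ((∑ u, s u) / (n : ℝ)) * C.card)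

section

variable {n : ℕ} (s : Fin n → ℝ) (τ : ℝ)

noncomputable def avgScore : ℝ := (∑ u, s u) / n

theorem ESG_eq_sum_sub_div (C : Finset (Fin n)) :
    ESG s τ C = (∑ v ∈ C, (s v - avgScore s)) / (#C : ℝ) ^ τ := by
  rw [ESG, avgScore, sum_sub_distrib, sum_const, nsmul_eq_mul]
  ring

theorem ESG_insert_sub_ESG {C : Finset (Fin n)} {u : Fin n} (hu : u ∉ C)
    (hC : ∑ v ∈ C, (s v - avgScore s) = 0) :
    ESG s τ (insert u C) - ESG s τ C = (s u - avgScore s) / ((#C : ℝ) + 1) ^ τ := by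
  rw [ESG_eq_sum_sub_div, ESG_eq_sum_sub_div, sum_insert hu, hC, card_insert_of_notMem hu]
  push_cast
  ring

theorem ESG_insert_sub_ESG_lt {A B : Finset (Fin n)} {u : Fin n} (hτ : 0 < τ)
    (hAB : #A < #B) (huA : u ∉ A) (huB : u ∉ B)
    (hA : ∑ v ∈ A, (s v - avgScore s) = 0) (hB : ∑ v ∈ B, (s v - avgScore s) = 0)
    (hu : s u < avgScore s) :
    ESG s τ (insert u A) - ESG s τ A < ESG s τ (insert u B) - ESG s τ B := by
  rw [ESG_insert_sub_ESG s τ huA hA, ESG_insert_sub_ESG s τ huB hB]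
  have hdil : ((#A : ℝ) + 1) ^ τ < ((#B : ℝ) + 1) ^ τ :=
    Real.rpow_lt_rpow (by positivity) (by exact_mod_cast Nat.add_lt_add_right hAB 1) hτ
  have := div_lt_div_of_pos_left (neg_pos.2 (sub_neg.2 hu)) (by positivity) hdil
  rwa [neg_div, neg_div, neg_lt_neg_iff] at this

end

theorem ESG_not_submodular_of_pos {τ : ℝ} (hτ : 0 < τ) :
    ∃ (n : ℕ) (s : Fin n → ℝ) (A B : Finset (Fin n)) (u : Fin n),
      A ⊆ B ∧ u ∉ B ∧ ESG s τ (insert u A) - ESG s τ A < ESG s τ (insert u B) - ESG s τ B := by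
  refine ⟨4, ![0, 0, -1, 1], {0}, {0, 1}, 2, by decide, by decide, ?_⟩
  apply ESG_insert_sub_ESG_lt _ _ hτ (by decide) (by decide) (by decide) <;>
    simp [avgScore, Fin.sum_univ_four]

theorem ESG_not_submodular :
    ∃ (n : ℕ) (s : Fin n → ℝ) (A B : Finset (Fin n)) (u : Fin n),
      A ⊆ B ∧ u ∉ B ∧
      ESG s 0.9 (insert u A) - ESG s 0.9 A < ESG s 0.9 (insert u B) - ESG s 0.9 B :=
  ESG_not_submodular_of_pos (by norm_num)
end

section
/- With V = {x, y, u}, scores s_x = 1.0, s_y = 0.5, s_u = 0.1, τ = 0.9, A = {x}, B = {x, y}, the marginal gain of adding u to A is strictly less than the marginal gain of adding u to B, i.e., ESG(A ∪ {u}) − ESG(A) < ESG(B ∪ {u}) − ESG(B). -/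
open Finset

/-!
Write `d v = s v - m` for the deviation of a score from the mean `m`, so that
`ESG C = (∑ v ∈ C, d v) / |C|^τ` and the deviations sum to zero. For `V = {0, 1, 2}` the marginal
gains of adding `2` to `{0}` and to `{0, 1}` are `(d₀ + d₂)/2^τ - d₀` and `0 - (d₀ + d₁)/2^τ`;
since `d₀ + d₁ + d₂ = 0` their difference is `d₀ (1/2^τ - 1)`, which is negative as soon as
`d₀ > 0` and `τ > 0`. In the example `d₀ = 1 - 8/15 > 0`.
-/

section ESG

variable {n : ℕ} (s : Fin n → ℝ) (τ : ℝ)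

theorem ESG_eq_sum_sub_mean_div (C : Finset (Fin n)) :
    ESG s τ C = (∑ v ∈ C, (s v - (∑ u, s u) / n)) / (C.card : ℝ) ^ τ := by
  rw [ESG, sum_sub_distrib, sum_const, nsmul_eq_mul]
  ring

theorem sum_sub_mean_eq_zero : ∑ v, (s v - (∑ u, s u) / n) = 0 := by
  rcases Nat.eq_zero_or_pos n with rfl | hn
  · simp
  · rw [sum_sub_distrib, sum_const, card_univ, Fintype.card_fin, nsmul_eq_mul,
      mul_div_cancel₀ _ (by positivity : (n : ℝ) ≠ 0), sub_self]

theorem ESG_univ : ESG s τ univ = 0 := by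
  rw [ESG_eq_sum_sub_mean_div, sum_sub_mean_eq_zero, zero_div]

theorem ESG_singleton (i : Fin n) : ESG s τ {i} = s i - (∑ u, s u) / n := by
  rw [ESG_eq_sum_sub_mean_div, sum_singleton, card_singleton, Nat.cast_one, Real.one_rpow,
    div_one]

theorem ESG_pair {i j : Fin n} (hij : i ≠ j) :
    ESG s τ {i, j} = (s i - (∑ u, s u) / n + (s j - (∑ u, s u) / n)) / (2 : ℝ) ^ τ := by
  rw [ESG_eq_sum_sub_mean_div, sum_pair hij, card_pair hij, Nat.cast_two]

end ESG

theorem ESG_insert_two_sub_lt {s : Fin 3 → ℝ} {τ : ℝ} (hτ : 0 < τ)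
    (hs : (∑ u, s u) / 3 < s 0) :
    ESG s τ (insert 2 {0}) - ESG s τ {0} < ESG s τ (insert 2 {0, 1}) - ESG s τ {0, 1} := by
  have hB : insert 2 ({0, 1} : Finset (Fin 3)) = univ := by decide
  have hsum := sum_sub_mean_eq_zero s
  rw [Fin.sum_univ_three, Nat.cast_ofNat] at hsum
  rw [hB, ESG_univ, ESG_singleton, ESG_pair s τ (by decide : (2 : Fin 3) ≠ 0),
    ESG_pair s τ (by decide : (0 : Fin 3) ≠ 1), Nat.cast_ofNat]
  generalize (∑ u, s u) / 3 = m at hs hsum ⊢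
  have hsplit : (s 2 - m + (s 0 - m)) / (2 : ℝ) ^ τ + (s 0 - m + (s 1 - m)) / (2 : ℝ) ^ τ
      = (s 0 - m) / (2 : ℝ) ^ τ := by
    rw [← add_div]
    congr 1
    linarith
  linarith [div_lt_self (sub_pos.2 hs) (Real.one_lt_rpow one_lt_two hτ)]

theorem ESG_counterexample :
    let s : Fin 3 → ℝ := ![1.0, 0.5, 0.1]
    let A : Finset (Fin 3) := {0}
    let B : Finset (Fin 3) := {0, 1}
    let u : Fin 3 := 2
    ESG s 0.9 (insert u A) - ESG s 0.9 A < ESG s 0.9 (insert u B) - ESG s 0.9 B := by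
  intro s A B u
  refine ESG_insert_two_sub_lt (by norm_num) ?_
  norm_num [s, Fin.sum_univ_three, Matrix.cons_val_two]
end
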